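/- If X₁ and X₂ are simplicial complexes on disjoint finite vertex sets V₁ and V₂, then θ(X₁ * X₂) = θ(X₁) + θ(X₂), where X₁ * X₂ := {A ∪ B : A ∈ X₁, B ∈ X₂} is the simplicial join. -/

import Mathlib

/-!
For a vertex `v` of `X₁`, which is not a vertex of `X₂`, deletion and link commute with the join:
`del(X₁ * X₂, v) = del(X₁, v) * X₂` and `lk(X₁ * X₂, v) = lk(X₁, v) * X₂`. Joining with a nonempty
complex on disjoint vertices is injective, so the non-cone vertices of `X₁ * X₂` are exactly those
of `X₁` and of `X₂`. By induction on the sizes of the factors, splitting `X₁ * X₂` at a non-cone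
vertex of `X₁` then costs `max{θ(del(X₁, v)), θ(lk(X₁, v)) + 1} + θ(X₂)`, symmetrically for `X₂`,
and minimizing over all non-cone vertices gives `θ(X₁) + θ(X₂)`.
-/

namespace ThetaPaper

variable {α : Type*} [DecidableEq α]

def delF (X : Finset (Finset α)) (v : α) : Finset (Finset α) :=
  X.filter fun S => v ∉ S

def lkF (X : Finset (Finset α)) (v : α) : Finset (Finset α) :=
  X.filter fun T => v ∉ T ∧ insert v T ∈ X

def vertF (X : Finset (Finset α)) : Finset α := X.biUnion id

def nonConeF (X : Finset (Finset α)) : Finset α :=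
  (vertF X).filter fun v => delF X v ≠ lkF X v

lemma delF_card_lt {X : Finset (Finset α)} {v : α} (h : v ∈ nonConeF X) :
    (delF X v).card < X.card := by
  obtain ⟨A, hA, hvA⟩ := Finset.mem_biUnion.mp (Finset.mem_filter.mp h).1
  refine Finset.card_lt_card ⟨Finset.filter_subset _ _, fun hsub => ?_⟩
  have h2 := hsub hA
  rw [delF, Finset.mem_filter] at h2
  exact h2.2 hvA

lemma lkF_card_lt {X : Finset (Finset α)} {v : α} (h : v ∈ nonConeF X) :
    (lkF X v).card < X.card := by
  obtain ⟨A, hA, hvA⟩ := Finset.mem_biUnion.mp (Finset.mem_filter.mp h).1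
  refine Finset.card_lt_card ⟨Finset.filter_subset _ _, fun hsub => ?_⟩
  have h2 := hsub hA
  rw [lkF, Finset.mem_filter] at h2
  exact h2.2.1 hvA

def theta (X : Finset (Finset α)) : ℕ :=
  if h : (nonConeF X).Nonempty then
    (nonConeF X).attach.inf' (Finset.attach_nonempty_iff.mpr h) fun v =>
      max (theta (delF X v.1)) (theta (lkF X v.1) + 1)
  else 0
termination_by X.card
decreasing_by
  · exact delF_card_lt v.2
  · exact lkF_card_lt v.2

def IsComplex (X : Finset (Finset α)) : Prop :=
  ∀ A ∈ X, ∀ B, B ⊆ A → B ∈ X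

/-- `dim(X)`, as an integer: the maximum of `|A| - 1` over faces `A ∈ X`. -/
noncomputable def dimZ (X : Finset (Finset α)) : ℤ :=
  sSup {d : ℤ | ∃ A ∈ X, d = (A.card : ℤ) - 1}

/-- A circuit (minimal non-face) of `X`. -/
def IsCircuit (X : Finset (Finset α)) (S : Finset α) : Prop :=
  S ∉ X ∧ ∀ T ⊂ S, T ∈ X

/-- A circuit cover of `X`. -/
def IsCircuitCover (X : Finset (Finset α)) (C : Finset α) : Prop :=
  ∀ S : Finset α, IsCircuit X S → (S.card : ℤ) - 1 ≤ ((S ∩ C).card : ℤ)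

/-- The circuit cover number `ccn(X)` of a complex with vertex set `V`. -/
noncomputable def ccnZ (V : Finset α) (X : Finset (Finset α)) : ℤ :=
  sInf {k : ℤ | ∃ C ⊆ V, IsCircuitCover X C ∧
    k = dimZ (X.filter fun A => A ⊆ C) + 1}

/-- The simplicial join. -/
def joinF (X₁ X₂ : Finset (Finset α)) : Finset (Finset α) :=
  X₁.biUnion fun A => X₂.image fun B => A ∪ B

/-- A facet (maximal face) of `X`. -/
def IsFacet (X : Finset (Finset α)) (B : Finset α) : Prop :=
  B ∈ X ∧ ∀ C ∈ X, B ⊆ C → C = B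

/-- An elementary `k`-collapse: remove the interval `[A, B]` where `A` is a face of size
at most `k` contained in the unique facet `B`. -/
def ElemCollapse (k : ℕ) (X Y : Finset (Finset α)) : Prop :=
  ∃ A B : Finset α, A ∈ X ∧ A.card ≤ k ∧ IsFacet X B ∧ A ⊆ B ∧
    (∀ C, IsFacet X C → A ⊆ C → C = B) ∧
    Y = X.filter fun C => ¬ (A ⊆ C ∧ C ⊆ B)

/-- `X` is `k`-collapsible: it reduces to the void complex by elementary `k`-collapses. -/
def Collapsible (k : ℕ) (X : Finset (Finset α)) : Prop :=
  Relation.ReflTransGen (ElemCollapse k) X ∅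

/-- The collapsibility number `C(X)`. -/
noncomputable def collapseNum (X : Finset (Finset α)) : ℕ :=
  sInf {k : ℕ | Collapsible k X}

/-- `k(X)`: the maximum size of a set `{x₁, …, x_k}` of vertices of `X` admitting facets
`A₁, …, A_{k+1}` with `x_i ∉ A_i` and `x_i ∈ A_j` for `i < j`. -/
noncomputable def kNum (X : Finset (Finset α)) : ℕ :=
  sSup {k : ℕ | ∃ (x : Fin k → α) (A : Fin (k + 1) → Finset α),
    Function.Injective x ∧ (∀ i, {x i} ∈ X) ∧ (∀ j, IsFacet X (A j)) ∧
    (∀ i : Fin k, x i ∉ A i.castSucc) ∧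
    (∀ (i : Fin k) (j : Fin (k + 1)), (i : ℕ) < (j : ℕ) → x i ∈ A j)}

/-- Vertex decomposable simplicial complexes. -/
inductive VertexDecomposable : Finset (Finset α) → Prop
  | simplex (S : Finset α) : VertexDecomposable S.powerset
  | shed (X : Finset (Finset α)) (v : α) (hv : {v} ∈ X)
      (hdel : VertexDecomposable (delF X v)) (hlk : VertexDecomposable (lkF X v))
      (hfacet : ∀ B, IsFacet (delF X v) B → IsFacet X B) : VertexDecomposable X

section Graphs

variable {V : Type*} [Fintype V] [DecidableEq V]

open Classical in
/-- The independence complex of a graph, as a `Finset` of faces. -/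
noncomputable def indComplex (G : SimpleGraph V) : Finset (Finset V) :=
  Finset.univ.powerset.filter fun A => ∀ x ∈ A, ∀ y ∈ A, ¬ G.Adj x y

/-- The theta-number of a graph: the theta-number of its independence complex. -/
noncomputable def thetaG (G : SimpleGraph V) : ℕ := theta (indComplex G)

/-- A graph is chordal if it has no induced cycle of length greater than `3`. -/
def Chordal {W : Type*} (G : SimpleGraph W) : Prop :=
  ∀ n : ℕ, 3 < n → IsEmpty (SimpleGraph.cycleGraph n ↪g G)

/-- Contraction of the edge `xy`: the merged vertex is `x`, and `y` becomes isolated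
(isolated vertices are irrelevant for the independence complex/theta-number). -/
def contractEdge (G : SimpleGraph V) (x y : V) : SimpleGraph V where
  Adj a b := a ≠ b ∧ a ≠ y ∧ b ≠ y ∧
    ((a = x ∧ (G.Adj x b ∨ G.Adj y b)) ∨
     (b = x ∧ (G.Adj a x ∨ G.Adj a y)) ∨
     (a ≠ x ∧ b ≠ x ∧ G.Adj a b))
  symm := by
    constructor
    rintro a b ⟨hab, hay, hby, h⟩
    refine ⟨Ne.symm hab, hby, hay, ?_⟩
    rcases h with ⟨ha, h⟩ | ⟨hb, h⟩ | ⟨ha, hb, h⟩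
    · exact Or.inr (Or.inl ⟨ha, h.imp (fun t => t.symm) (fun t => t.symm)⟩)
    · exact Or.inl ⟨hb, h.imp (fun t => t.symm) (fun t => t.symm)⟩
    · exact Or.inr (Or.inr ⟨hb, ha, h.symm⟩)
  loopless := ⟨by rintro a ⟨h, -⟩; exact h rfl⟩

/-- One edge-contraction step: `H` is obtained from `G` by contracting an edge of `G`. -/
def ContractionStep (G H : SimpleGraph V) : Prop :=
  ∃ x y, G.Adj x y ∧ H = contractEdge G x y

/-- A matching of `G` (a set of pairwise disjoint edges). -/
def IsMatching (G : SimpleGraph V) (M : Finset (Sym2 V)) : Prop :=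
  (∀ e ∈ M, e ∈ G.edgeSet) ∧
    ∀ e ∈ M, ∀ f ∈ M, e ≠ f → ∀ x, x ∈ e → x ∉ f

/-- An induced matching of `G`: a matching such that no two vertices belonging to
different edges of it are adjacent. -/
def IsInducedMatching (G : SimpleGraph V) (M : Finset (Sym2 V)) : Prop :=
  IsMatching G M ∧ ∀ e ∈ M, ∀ f ∈ M, e ≠ f → ∀ x ∈ e, ∀ y ∈ f, ¬ G.Adj x y

/-- The induced matching number `im(G)`. -/
noncomputable def inducedMatchingNum (G : SimpleGraph V) : ℕ :=
  sSup {k : ℕ | ∃ M, IsInducedMatching G M ∧ M.card = k}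

/-- A maximal matching. -/
def IsMaximalMatching (G : SimpleGraph V) (M : Finset (Sym2 V)) : Prop :=
  IsMatching G M ∧ ∀ N, IsMatching G N → M ⊆ N → N = M

/-- `min-m(G)`: the minimum size of a maximal matching. -/
noncomputable def minMaximalMatchingNum (G : SimpleGraph V) : ℕ :=
  sInf {k : ℕ | ∃ M, IsMaximalMatching G M ∧ M.card = k}

/-- Independent (stable) sets of a graph. -/
def IsIndepSet (G : SimpleGraph V) (A : Finset V) : Prop :=
  ∀ x ∈ A, ∀ y ∈ A, ¬ G.Adj x y

/-- A vertex cover. -/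
def IsVertexCover (G : SimpleGraph V) (C : Finset V) : Prop :=
  ∀ x y, G.Adj x y → x ∈ C ∨ y ∈ C

/-- `α(G[F])`: the maximum size of an independent set of `G` contained in `F`. -/
noncomputable def indepNumOn (G : SimpleGraph V) (F : Finset V) : ℕ :=
  sSup {k : ℕ | ∃ A ⊆ F, IsIndepSet G A ∧ A.card = k}

/-- The circuit cover number of a graph: `ccn(G) = min{α(G[F]) : F a vertex cover}`. -/
noncomputable def ccnG (G : SimpleGraph V) : ℕ :=
  sInf {k : ℕ | ∃ F, IsVertexCover G F ∧ k = indepNumOn G F}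

open Classical in
/-- The closed neighborhood of a vertex, as a `Finset`. -/
noncomputable def closedNbhd (G : SimpleGraph V) (x : V) : Finset V :=
  Finset.univ.filter fun z => z = x ∨ G.Adj x z

/-- The maximum privacy degree `Γ(G) = max{|N[x] \ N[y]| : xy ∈ E(G)}`. -/
noncomputable def privacyDeg (G : SimpleGraph V) : ℕ :=
  sSup {k : ℕ | ∃ x y, G.Adj x y ∧ k = (closedNbhd G x \ closedNbhd G y).card}

open Classical in
/-- The maximum degree `Δ(G)`. -/
noncomputable def maxDeg (G : SimpleGraph V) : ℕ :=
  sSup {k : ℕ | ∃ v, k = (Finset.univ.filter fun z => G.Adj v z).card}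

end Graphs

open Classical in
/-- `V(M)`: the set of vertices incident to the edges of `M`. -/
noncomputable def matchVerts {V : Type*} [Fintype V] (M : Finset (Sym2 V)) : Finset V :=
  Finset.univ.filter fun x => ∃ e ∈ M, x ∈ e

variable {X : Finset (Finset α)}

lemma mem_vertF {v : α} : v ∈ vertF X ↔ ∃ A ∈ X, v ∈ A := by
  simp [vertF]

lemma subset_vertF {A : Finset α} (hA : A ∈ X) : A ⊆ vertF X :=
  Finset.subset_biUnion_of_mem id hA

lemma vertF_mono {Y : Finset (Finset α)} (h : X ⊆ Y) : vertF X ⊆ vertF Y :=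
  Finset.biUnion_subset_biUnion_of_subset_left _ h

lemma nonConeF_subset_vertF : nonConeF X ⊆ vertF X :=
  Finset.filter_subset _ _

lemma delF_ssubset {v : α} (hv : v ∈ vertF X) : delF X v ⊂ X := by
  obtain ⟨A, hA, hvA⟩ := mem_vertF.1 hv
  exact Finset.filter_ssubset.2 ⟨A, hA, not_not.2 hvA⟩

lemma lkF_ssubset {v : α} (hv : v ∈ vertF X) : lkF X v ⊂ X := by
  obtain ⟨A, hA, hvA⟩ := mem_vertF.1 hv
  exact Finset.filter_ssubset.2 ⟨A, hA, fun h => h.1 hvA⟩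

lemma isComplex_delF (hX : IsComplex X) (v : α) : IsComplex (delF X v) := by
  intro A hA B hBA
  rw [delF, Finset.mem_filter] at hA ⊢
  exact ⟨hX A hA.1 B hBA, fun hvB => hA.2 (hBA hvB)⟩

lemma isComplex_lkF (hX : IsComplex X) (v : α) : IsComplex (lkF X v) := by
  intro A hA B hBA
  rw [lkF, Finset.mem_filter] at hA ⊢
  exact ⟨hX A hA.1 B hBA, fun hvB => hA.2.1 (hBA hvB),
    hX _ hA.2.2 _ (Finset.insert_subset_insert v hBA)⟩

lemma IsComplex.singleton_mem (hX : IsComplex X) {v : α} (hv : v ∈ vertF X) : {v} ∈ X := by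
  obtain ⟨A, hA, hvA⟩ := mem_vertF.1 hv
  exact hX A hA {v} (Finset.singleton_subset_iff.2 hvA)

lemma IsComplex.delF_nonempty (hX : IsComplex X) (hne : X.Nonempty) (v : α) :
    (delF X v).Nonempty :=
  ⟨∅, Finset.mem_filter.2 ⟨hX _ hne.choose_spec ∅ (Finset.empty_subset _), Finset.notMem_empty v⟩⟩

lemma IsComplex.lkF_nonempty (hX : IsComplex X) {v : α} (hv : v ∈ vertF X) :
    (lkF X v).Nonempty :=
  ⟨∅, Finset.mem_filter.2 ⟨hX _ (hX.singleton_mem hv) ∅ (Finset.empty_subset _),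
    Finset.notMem_empty v, hX.singleton_mem hv⟩⟩

section Join

variable {X₁ X₂ : Finset (Finset α)}

lemma mem_joinF {S : Finset α} : S ∈ joinF X₁ X₂ ↔ ∃ A ∈ X₁, ∃ B ∈ X₂, A ∪ B = S := by
  simp [joinF]

lemma union_mem_joinF {A B : Finset α} (hA : A ∈ X₁) (hB : B ∈ X₂) : A ∪ B ∈ joinF X₁ X₂ :=
  mem_joinF.2 ⟨A, hA, B, hB, rfl⟩

lemma joinF_comm : joinF X₁ X₂ = joinF X₂ X₁ := by
  ext S
  simp only [mem_joinF]
  constructor <;> rintro ⟨A, hA, B, hB, rfl⟩ <;> exact ⟨B, hB, A, hA, Finset.union_comm _ _⟩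

lemma vertF_joinF (hne₁ : X₁.Nonempty) (hne₂ : X₂.Nonempty) :
    vertF (joinF X₁ X₂) = vertF X₁ ∪ vertF X₂ := by
  obtain ⟨A₀, hA₀⟩ := hne₁
  obtain ⟨B₀, hB₀⟩ := hne₂
  ext v
  simp only [mem_vertF, mem_joinF, Finset.mem_union]
  constructor
  · rintro ⟨_, ⟨A, hA, B, hB, rfl⟩, hv⟩
    exact (Finset.mem_union.1 hv).imp (fun h => ⟨A, hA, h⟩) (fun h => ⟨B, hB, h⟩)
  · rintro (⟨A, hA, hv⟩ | ⟨B, hB, hv⟩)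
    · exact ⟨_, ⟨A, hA, B₀, hB₀, rfl⟩, Finset.mem_union_left _ hv⟩
    · exact ⟨_, ⟨A₀, hA₀, B, hB, rfl⟩, Finset.mem_union_right _ hv⟩

lemma delF_joinF {v : α} (hv : v ∉ vertF X₂) :
    delF (joinF X₁ X₂) v = joinF (delF X₁ v) X₂ := by
  ext S
  simp only [delF, Finset.mem_filter, mem_joinF]
  constructor
  · rintro ⟨⟨A, hA, B, hB, rfl⟩, hvS⟩
    exact ⟨A, ⟨hA, fun h => hvS (Finset.mem_union_left _ h)⟩, B, hB, rfl⟩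
  · rintro ⟨A, ⟨hA, hvA⟩, B, hB, rfl⟩
    have hvB : v ∉ B := fun h => hv (subset_vertF hB h)
    exact ⟨⟨A, hA, B, hB, rfl⟩, by simp [hvA, hvB]⟩

lemma lkF_joinF (h₁ : IsComplex X₁) {v : α} (hv : v ∉ vertF X₂) :
    lkF (joinF X₁ X₂) v = joinF (lkF X₁ v) X₂ := by
  ext S
  simp only [lkF, Finset.mem_filter, mem_joinF]
  constructor
  · rintro ⟨-, hvS, A, hA, B, hB, hAB⟩
    have hvA : v ∈ A := by
      have := hAB ▸ Finset.mem_insert_self v S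
      exact (Finset.mem_union.1 this).resolve_right fun h => hv (subset_vertF hB h)
    refine ⟨A.erase v, ⟨h₁ A hA _ (Finset.erase_subset v A), Finset.notMem_erase v A,
      (Finset.insert_erase hvA).symm ▸ hA⟩, B, hB, ?_⟩
    rw [← Finset.erase_insert hvS, ← hAB, Finset.erase_union_distrib,
      Finset.erase_eq_of_notMem fun h => hv (subset_vertF hB h)]
  · rintro ⟨A, ⟨hA, hvA, hvAX⟩, B, hB, rfl⟩
    have hvB : v ∉ B := fun h => hv (subset_vertF hB h)
    exact ⟨⟨A, hA, B, hB, rfl⟩, by simp [hvA, hvB],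
      insert v A, hvAX, B, hB, Finset.insert_union v A B⟩

/-- The factor `Y` of `Y * X` is recovered from each face by removing the vertices of `X`. -/
lemma subset_of_joinF_subset_joinF {Y Y' : Finset (Finset α)} (hne : X.Nonempty)
    (hY : Disjoint (vertF Y) (vertF X)) (hY' : Disjoint (vertF Y') (vertF X))
    (h : joinF Y X ⊆ joinF Y' X) : Y ⊆ Y' := by
  have recover : ∀ {Z A B}, Disjoint (vertF Z) (vertF X) → A ∈ Z → B ∈ X →
      (A ∪ B) \ vertF X = A := fun hZ hA hB => by
    rw [Finset.union_sdiff_distrib, Finset.sdiff_eq_self_of_disjoint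
      (hZ.mono_left (subset_vertF hA)), Finset.sdiff_eq_empty_iff_subset.2 (subset_vertF hB),
      Finset.union_empty]
  intro A hA
  obtain ⟨B, hB⟩ := hne
  obtain ⟨A', hA', B', hB', hAB⟩ := mem_joinF.1 (h (union_mem_joinF hA hB))
  rwa [← recover hY' hA' hB', hAB, recover hY hA hB] at hA'

lemma joinF_left_inj {Y Y' : Finset (Finset α)} (hne : X.Nonempty)
    (hY : Disjoint (vertF Y) (vertF X)) (hY' : Disjoint (vertF Y') (vertF X)) :
    joinF Y X = joinF Y' X ↔ Y = Y' :=
  ⟨fun h => (subset_of_joinF_subset_joinF hne hY hY' h.le).antisymm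
    (subset_of_joinF_subset_joinF hne hY' hY h.ge), congrArg (joinF · X)⟩

lemma mem_nonConeF_joinF_of_mem_vertF (h₁ : IsComplex X₁) (hne₂ : X₂.Nonempty)
    (hdis : Disjoint (vertF X₁) (vertF X₂)) {v : α} (hv : v ∈ vertF X₁) :
    v ∈ nonConeF (joinF X₁ X₂) ↔ v ∈ nonConeF X₁ := by
  have hv₂ : v ∉ vertF X₂ := Finset.disjoint_left.1 hdis hv
  have hne₁ : X₁.Nonempty := ⟨_, h₁.singleton_mem hv⟩
  have hvJ : v ∈ vertF (joinF X₁ X₂) := vertF_joinF hne₁ hne₂ ▸ Finset.mem_union_left _ hv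
  simp only [nonConeF, Finset.mem_filter, hv, hvJ, true_and, delF_joinF hv₂, lkF_joinF h₁ hv₂,
    ne_eq, joinF_left_inj hne₂ (hdis.mono_left (vertF_mono (delF_ssubset hv).subset))
      (hdis.mono_left (vertF_mono (lkF_ssubset hv).subset))]

lemma nonConeF_joinF (h₁ : IsComplex X₁) (h₂ : IsComplex X₂) (hne₁ : X₁.Nonempty)
    (hne₂ : X₂.Nonempty) (hdis : Disjoint (vertF X₁) (vertF X₂)) :
    nonConeF (joinF X₁ X₂) = nonConeF X₁ ∪ nonConeF X₂ := by
  ext v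
  by_cases hv₁ : v ∈ vertF X₁
  · have : v ∉ nonConeF X₂ := fun h =>
      Finset.disjoint_left.1 hdis hv₁ (nonConeF_subset_vertF h)
    simp [mem_nonConeF_joinF_of_mem_vertF h₁ hne₂ hdis hv₁, this]
  have hv₁' : v ∉ nonConeF X₁ := fun h => hv₁ (nonConeF_subset_vertF h)
  by_cases hv₂ : v ∈ vertF X₂
  · rw [joinF_comm]
    simp [mem_nonConeF_joinF_of_mem_vertF h₂ hne₁ hdis.symm hv₂, hv₁']
  · have hv₂' : v ∉ nonConeF X₂ := fun h => hv₂ (nonConeF_subset_vertF h)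
    have hvJ : v ∉ vertF (joinF X₁ X₂) := by simp [vertF_joinF hne₁ hne₂, hv₁, hv₂]
    have hvJ' : v ∉ nonConeF (joinF X₁ X₂) := fun h => hvJ (nonConeF_subset_vertF h)
    simp [hvJ', hv₁', hv₂']

end Join

def thetaAt (X : Finset (Finset α)) (v : α) : ℕ :=
  max (theta (delF X v)) (theta (lkF X v) + 1)

lemma theta_eq_zero (h : nonConeF X = ∅) : theta X = 0 := by
  rw [theta, dif_neg (by simp [h])]

lemma theta_le_thetaAt {v : α} (hv : v ∈ nonConeF X) : theta X ≤ thetaAt X v := by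
  rw [theta, dif_pos ⟨v, hv⟩]
  exact Finset.inf'_le _ (Finset.mem_attach _ ⟨v, hv⟩)

lemma exists_thetaAt_eq (h : (nonConeF X).Nonempty) :
    ∃ v ∈ nonConeF X, thetaAt X v = theta X := by
  rw [theta, dif_pos h]
  obtain ⟨v, -, hv⟩ := Finset.exists_mem_eq_inf' (Finset.attach_nonempty_iff.2 h)
    fun v => thetaAt X v.1
  exact ⟨v.1, v.2, hv.symm⟩

lemma theta_eq_add_of_thetaAt {J X₁ X₂ : Finset (Finset α)}
    (hN : nonConeF J = nonConeF X₁ ∪ nonConeF X₂)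
    (hJ₁ : ∀ v ∈ nonConeF X₁, thetaAt J v = thetaAt X₁ v + theta X₂)
    (hJ₂ : ∀ v ∈ nonConeF X₂, thetaAt J v = thetaAt X₂ v + theta X₁) :
    theta J = theta X₁ + theta X₂ := by
  refine le_antisymm ?_ ?_
  · rcases (nonConeF X₁).eq_empty_or_nonempty with hN₁ | hN₁
    · rcases (nonConeF X₂).eq_empty_or_nonempty with hN₂ | hN₂
      · simp [theta_eq_zero, hN, hN₁, hN₂]
      · obtain ⟨v, hv, hθ⟩ := exists_thetaAt_eq hN₂
        calc theta J ≤ thetaAt J v := theta_le_thetaAt (hN ▸ Finset.mem_union_right _ hv)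
          _ = theta X₁ + theta X₂ := by rw [hJ₂ v hv, hθ, add_comm]
    · obtain ⟨v, hv, hθ⟩ := exists_thetaAt_eq hN₁
      calc theta J ≤ thetaAt J v := theta_le_thetaAt (hN ▸ Finset.mem_union_left _ hv)
        _ = theta X₁ + theta X₂ := by rw [hJ₁ v hv, hθ]
  · rcases (nonConeF J).eq_empty_or_nonempty with hNJ | hNJ
    · obtain ⟨hN₁, hN₂⟩ := Finset.union_eq_empty.1 (hN ▸ hNJ)
      simp [theta_eq_zero hN₁, theta_eq_zero hN₂]
    · obtain ⟨v, hv, hθ⟩ := exists_thetaAt_eq hNJ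
      rw [← hθ]
      rcases Finset.mem_union.1 (hN ▸ hv) with hv | hv
      · rw [hJ₁ v hv]
        exact Nat.add_le_add_right (theta_le_thetaAt hv) _
      · rw [hJ₂ v hv, add_comm]
        exact Nat.add_le_add_right (theta_le_thetaAt hv) _

lemma thetaAt_joinF {X₁ X₂ : Finset (Finset α)} (h₁ : IsComplex X₁)
    (hdis : Disjoint (vertF X₁) (vertF X₂)) {v : α} (hv : v ∈ vertF X₁)
    (ih : ∀ Y ⊂ X₁, IsComplex Y → Y.Nonempty → theta (joinF Y X₂) = theta Y + theta X₂) :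
    thetaAt (joinF X₁ X₂) v = thetaAt X₁ v + theta X₂ := by
  have hv₂ : v ∉ vertF X₂ := Finset.disjoint_left.1 hdis hv
  rw [thetaAt, thetaAt, delF_joinF hv₂, lkF_joinF h₁ hv₂,
    ih _ (delF_ssubset hv) (isComplex_delF h₁ v) (h₁.delF_nonempty ⟨_, h₁.singleton_mem hv⟩ v),
    ih _ (lkF_ssubset hv) (isComplex_lkF h₁ v) (h₁.lkF_nonempty hv)]
  omega

theorem theta_joinF {X₁ X₂ : Finset (Finset α)} (h₁ : IsComplex X₁) (h₂ : IsComplex X₂)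
    (hne₁ : X₁.Nonempty) (hne₂ : X₂.Nonempty) (hdis : Disjoint (vertF X₁) (vertF X₂)) :
    theta (joinF X₁ X₂) = theta X₁ + theta X₂ :=
  theta_eq_add_of_thetaAt (nonConeF_joinF h₁ h₂ hne₁ hne₂ hdis)
    (fun _ hv => thetaAt_joinF h₁ hdis (nonConeF_subset_vertF hv) fun Y hY hYc hYne =>
      theta_joinF hYc h₂ hYne hne₂ (hdis.mono_left (vertF_mono hY.subset)))
    (fun _ hv => by
      rw [joinF_comm]
      refine thetaAt_joinF h₂ hdis.symm (nonConeF_subset_vertF hv) fun Y hY hYc hYne => ?_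
      rw [joinF_comm, add_comm]
      exact theta_joinF h₁ hYc hne₁ hYne (hdis.mono_right (vertF_mono hY.subset)))
termination_by X₁.card + X₂.card
decreasing_by all_goals have := Finset.card_lt_card hY; omega

theorem theta_join_eq_add {V₁ V₂ : Finset α} {X₁ X₂ : Finset (Finset α)}
    (h₁ : IsComplex X₁) (h₂ : IsComplex X₂)
    (hne₁ : X₁.Nonempty) (hne₂ : X₂.Nonempty)
    (hV₁ : ∀ A ∈ X₁, A ⊆ V₁) (hV₂ : ∀ A ∈ X₂, A ⊆ V₂)
    (hdis : Disjoint V₁ V₂) :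
    theta (joinF X₁ X₂) = theta X₁ + theta X₂ :=
  theta_joinF h₁ h₂ hne₁ hne₂
    (hdis.mono (Finset.biUnion_subset.2 hV₁) (Finset.biUnion_subset.2 hV₂))

end ThetaPaper
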